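/- arXiv:2206.05276 — 4 statements merged into one kernel-verified Lean document; each statement's English description precedes it below -/
import Mathlib

section
/- Consider the cheap-talk case (λ = 0) with 0 < β < 1. Let σ₀ be any probability density on M, let φ be a probability density supported outside supp σ₀, and define σ₁(m) = β σ₀(m) for m ∈ supp σ₀ and σ₁(m) = (1−β) φ(m) otherwise. Then σ₁ is a probability density, and the detector's rejection region {m : σ₁(m) > β σ₀(m)} equals supp φ, so the de facto detection rate is ∫_{supp φ} σ₁ = 1 − β. -/
open MeasureTheory Real

theorem stmt7 {M : Type*} [MeasurableSpace M] (μ : Measure M)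
    (β : ℝ) (hβ0 : 0 < β) (hβ1 : β < 1)
    (σ₀ φ : M → ℝ) (h₀_meas : Measurable σ₀) (hφ_meas : Measurable φ)
    (h₀_nonneg : ∀ m, 0 ≤ σ₀ m) (hφ_nonneg : ∀ m, 0 ≤ φ m)
    (h₀_int : Integrable σ₀ μ) (hφ_int : Integrable φ μ)
    (h₀_one : ∫ m, σ₀ m ∂μ = 1) (hφ_one : ∫ m, φ m ∂μ = 1)
    (hsupp : ∀ m, 0 < φ m → σ₀ m = 0)
    (σ₁ : M → ℝ)
    (hσ₁ : ∀ m, σ₁ m = if 0 < σ₀ m then β * σ₀ m else (1 - β) * φ m) :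
    (∀ m, 0 ≤ σ₁ m) ∧ (∫ m, σ₁ m ∂μ = 1) ∧
    {m | β * σ₀ m < σ₁ m} = {m | 0 < φ m} ∧
    (∫ m in {m | 0 < φ m}, σ₁ m ∂μ) = 1 - β := by
  have h1β : 0 < 1 - β := by linarith
  have hφ0 : ∀ m, 0 < σ₀ m → φ m = 0 := by
    intro m h
    by_contra hne
    have hpos : 0 < φ m := lt_of_le_of_ne (hφ_nonneg m) (Ne.symm hne)
    have := hsupp m hpos
    linarith
  have hkey : ∀ m, σ₁ m = β * σ₀ m + (1 - β) * φ m := by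
    intro m
    rw [hσ₁]
    by_cases h : 0 < σ₀ m
    · rw [if_pos h, hφ0 m h]; ring
    · have h0 : σ₀ m = 0 := le_antisymm (not_lt.mp h) (h₀_nonneg m)
      rw [if_neg h, h0]; ring
  have hnn : ∀ m, 0 ≤ σ₁ m := by
    intro m
    rw [hkey m]
    have := h₀_nonneg m; have := hφ_nonneg m
    positivity
  refine ⟨hnn, ?_, ?_, ?_⟩
  · have : (fun m => σ₁ m) = fun m => β * σ₀ m + (1 - β) * φ m :=
      funext hkey
    rw [this, integral_add (h₀_int.const_mul β) (hφ_int.const_mul (1 - β)),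
      integral_const_mul, integral_const_mul, h₀_one, hφ_one]
    ring
  · ext m
    simp only [Set.mem_setOf_eq, hkey m]
    constructor
    · intro h
      by_contra hne
      have : φ m = 0 := le_antisymm (not_lt.mp hne) (hφ_nonneg m)
      rw [this] at h; linarith
    · intro h
      have h0 : σ₀ m = 0 := hsupp m h
      rw [h0]
      nlinarith
  · have hmeas : MeasurableSet {m | 0 < φ m} := measurableSet_lt measurable_const hφ_meas
    have heq : ∀ m ∈ {m | 0 < φ m}, σ₁ m = (1 - β) * φ m := by
      intro m hm
      rw [hkey m, hsupp m hm]; ring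
    rw [setIntegral_congr_fun hmeas heq, integral_const_mul]
    have : ∫ m in {m | 0 < φ m}, φ m ∂μ = ∫ m, φ m ∂μ := by
      apply setIntegral_eq_integral_of_forall_compl_eq_zero
      intro m hm
      exact le_antisymm (not_lt.mp hm) (hφ_nonneg m)
    rw [this, hφ_one]; ring
end

section
/- Let f₀, f₁ be probability densities on M with f₀ ≠ f₁ (on a set of positive measure) and λ > 0. Suppose the detector applies a constant decision rule (δ(m) = 1 for all m, or δ(m) = 0 for all m). Then the attacker's best response to this rule, minimizing ∫_{δ=1} σ₁ + λ D(σ₁‖f₁) + λ D(σ₀‖f₀), is σ₁* = f₁ and σ₀* = f₀, and in particular σ₁* ≠ σ₀*. Consequently the signaling game admits no pooling equilibrium (no equilibrium with σ₁* = σ₀*) unless f₀ = f₁. -/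
open MeasureTheory Real

lemma stmt9_pt (x y : ℝ) (hx : 0 ≤ x) (hy : 0 ≤ y) (habs : y = 0 → x = 0) :
    x - y ≤ x * Real.log (x / y) ∧ (x * Real.log (x / y) = x - y → x = y) := by
  rcases eq_or_lt_of_le hy with hy0 | hy0
  · have hx0 : x = 0 := habs hy0.symm
    simp [hx0, ← hy0]
  rcases eq_or_lt_of_le hx with hx0 | hx0
  · refine ⟨by simp [← hx0]; linarith, ?_⟩
    intro h; simp [← hx0] at h ⊢; linarith
  have hq : 0 < y / x := div_pos hy0 hx0
  have hlog : Real.log (x / y) = - Real.log (y / x) := by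
    rw [← Real.log_inv, inv_div]
  have hxy : x * (y / x - 1) = y - x := by
    field_simp
  constructor
  · have hle : Real.log (y / x) ≤ y / x - 1 := Real.log_le_sub_one_of_pos hq
    have := mul_le_mul_of_nonneg_left hle hx
    rw [hxy] at this
    rw [hlog]; linarith
  · intro heq
    by_contra hne
    have hq1 : y / x ≠ 1 := by
      intro h
      exact hne ((div_eq_one_iff_eq (ne_of_gt hx0)).mp h).symm
    have hlt : Real.log (y / x) < y / x - 1 := Real.log_lt_sub_one_of_pos hq hq1
    have := mul_lt_mul_of_pos_left hlt hx0
    rw [hxy] at this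
    rw [hlog] at heq; linarith

lemma stmt9_gibbs {M : Type*} [MeasurableSpace M] (μ : Measure M) (f σ : M → ℝ)
    (hf0 : ∀ m, 0 ≤ f m) (hσ0 : ∀ m, 0 ≤ σ m)
    (hfi : Integrable f μ) (hσi : Integrable σ μ)
    (hf1 : ∫ m, f m ∂μ = 1) (hσ1 : ∫ m, σ m ∂μ = 1)
    (habs : ∀ m, f m = 0 → σ m = 0)
    (hint : Integrable (fun m => σ m * Real.log (σ m / f m)) μ) :
    0 ≤ ∫ m, σ m * Real.log (σ m / f m) ∂μ ∧
    ((∫ m, σ m * Real.log (σ m / f m) ∂μ) = 0 → σ =ᵐ[μ] f) := by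
  set g : M → ℝ := fun m => σ m * Real.log (σ m / f m) - (σ m - f m) with hg
  have hg0 : ∀ m, 0 ≤ g m := by
    intro m
    have := (stmt9_pt (σ m) (f m) (hσ0 m) (hf0 m) (habs m)).1
    simp only [hg]; linarith
  have hgi : Integrable g μ := hint.sub (hσi.sub hfi)
  have hgint : ∫ m, g m ∂μ = ∫ m, σ m * Real.log (σ m / f m) ∂μ := by
    simp only [hg]
    have h2 : Integrable (fun m => σ m - f m) μ := hσi.sub hfi
    rw [integral_sub hint h2, integral_sub hσi hfi, hσ1, hf1]
    ring
  constructor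
  · rw [← hgint]; exact integral_nonneg hg0
  · intro h0
    have : ∫ m, g m ∂μ = 0 := by rw [hgint, h0]
    have hae : g =ᵐ[μ] 0 :=
      (integral_eq_zero_iff_of_nonneg hg0 hgi).mp this
    filter_upwards [hae] with m hm
    have := (stmt9_pt (σ m) (f m) (hσ0 m) (hf0 m) (habs m)).2
    apply this
    simp only [hg, Pi.zero_apply] at hm; linarith

theorem stmt9 {M : Type*} [MeasurableSpace M] (μ : Measure M)
    (f₀ f₁ : M → ℝ)
    (hf₀_meas : Measurable f₀) (hf₁_meas : Measurable f₁)
    (hf₀_nonneg : ∀ m, 0 ≤ f₀ m) (hf₁_nonneg : ∀ m, 0 ≤ f₁ m)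
    (hf₀_int : Integrable f₀ μ) (hf₁_int : Integrable f₁ μ)
    (hf₀_one : ∫ m, f₀ m ∂μ = 1) (hf₁_one : ∫ m, f₁ m ∂μ = 1)
    (hne : ¬ f₀ =ᵐ[μ] f₁)
    (lam : ℝ) (hlam : 0 < lam)
    (S : Set M) (hS : S = Set.univ ∨ S = ∅) :
    ∀ σ₀ σ₁ : M → ℝ, Measurable σ₀ → Measurable σ₁ →
      (∀ m, 0 ≤ σ₀ m) → (∀ m, 0 ≤ σ₁ m) →
      Integrable σ₀ μ → Integrable σ₁ μ →
      (∫ m, σ₀ m ∂μ = 1) → (∫ m, σ₁ m ∂μ = 1) →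
      (∀ m, f₀ m = 0 → σ₀ m = 0) → (∀ m, f₁ m = 0 → σ₁ m = 0) →
      Integrable (fun m => σ₀ m * Real.log (σ₀ m / f₀ m)) μ →
      Integrable (fun m => σ₁ m * Real.log (σ₁ m / f₁ m)) μ →
      (((∫ m in S, f₁ m ∂μ)
          + lam * ((∫ m, f₁ m * Real.log (f₁ m / f₁ m) ∂μ)
            + ∫ m, f₀ m * Real.log (f₀ m / f₀ m) ∂μ))
        ≤ (∫ m in S, σ₁ m ∂μ)
          + lam * ((∫ m, σ₁ m * Real.log (σ₁ m / f₁ m) ∂μ)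
            + ∫ m, σ₀ m * Real.log (σ₀ m / f₀ m) ∂μ)) ∧
      (((∫ m in S, σ₁ m ∂μ)
          + lam * ((∫ m, σ₁ m * Real.log (σ₁ m / f₁ m) ∂μ)
            + ∫ m, σ₀ m * Real.log (σ₀ m / f₀ m) ∂μ))
        = ((∫ m in S, f₁ m ∂μ)
          + lam * ((∫ m, f₁ m * Real.log (f₁ m / f₁ m) ∂μ)
            + ∫ m, f₀ m * Real.log (f₀ m / f₀ m) ∂μ))
        → σ₁ =ᵐ[μ] f₁ ∧ σ₀ =ᵐ[μ] f₀ ∧ ¬ σ₁ =ᵐ[μ] σ₀) := by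
  intro σ₀ σ₁ hσ₀m hσ₁m hσ₀0 hσ₁0 hσ₀i hσ₁i hσ₀1 hσ₁1 habs₀ habs₁ hint₀ hint₁
  have hself : ∀ f : M → ℝ, (∫ m, f m * Real.log (f m / f m) ∂μ) = 0 := by
    intro f
    have h : ∀ m, f m * Real.log (f m / f m) = 0 := by
      intro m; by_cases h : f m = 0
      · simp [h]
      · rw [div_self h, Real.log_one, mul_zero]
    simp [h]
  have hS1 : ∫ m in S, σ₁ m ∂μ = ∫ m in S, f₁ m ∂μ := by
    rcases hS with h | h <;> subst h
    · simp only [Measure.restrict_univ]; rw [hσ₁1, hf₁_one]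
    · simp
  have hK1 := stmt9_gibbs μ f₁ σ₁ hf₁_nonneg hσ₁0 hf₁_int hσ₁i hf₁_one hσ₁1 habs₁ hint₁
  have hK0 := stmt9_gibbs μ f₀ σ₀ hf₀_nonneg hσ₀0 hf₀_int hσ₀i hf₀_one hσ₀1 habs₀ hint₀
  constructor
  · rw [hself f₁, hself f₀, hS1]
    nlinarith [hK1.1, hK0.1]
  · intro heq
    rw [hself f₁, hself f₀, hS1] at heq
    have hsum : (∫ m, σ₁ m * Real.log (σ₁ m / f₁ m) ∂μ)
        + (∫ m, σ₀ m * Real.log (σ₀ m / f₀ m) ∂μ) = 0 := by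
      have h0 : lam * ((∫ m, σ₁ m * Real.log (σ₁ m / f₁ m) ∂μ)
          + ∫ m, σ₀ m * Real.log (σ₀ m / f₀ m) ∂μ) = 0 := by linarith
      exact (mul_eq_zero.mp h0).resolve_left (ne_of_gt hlam)
    have h1 : (∫ m, σ₁ m * Real.log (σ₁ m / f₁ m) ∂μ) = 0 := by
      linarith [hK1.1, hK0.1]
    have h0 : (∫ m, σ₀ m * Real.log (σ₀ m / f₀ m) ∂μ) = 0 := by
      linarith [hK1.1, hK0.1]
    refine ⟨hK1.2 h1, hK0.2 h0, ?_⟩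
    intro hs
    exact hne (((hK0.2 h0).symm.trans hs.symm).trans (hK1.2 h1))
end

section
/- Binary message space case: let the hypotheses be Bernoulli, f₁ = Bernoulli(θ₁), f₀ = Bernoulli(θ₀) with 0 < θ₀ < θ₁ < 1, and let the passive detector's rejection region be M₁ = {1} (reject when the event fails). With λ > 0, the attacker's equilibrium strategy under H₁ is Bernoulli(θ̄₁) where θ̄₁ = θ₁ e^{-1/λ} / (θ₁ e^{-1/λ} + 1 − θ₁). Then 0 < θ̄₁ < θ₁, θ̄₁ is strictly increasing in λ, θ̄₁ → 0 as λ → 0⁺, and θ̄₁ → θ₁ as λ → ∞. -/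
open Real Filter Set Topology

/-!
Writing `t = exp (-1/λ)`, the distorted parameter is `θ̄₁ = θ₁ t / (θ₁ t + 1 - θ₁)`, the Bernoulli
parameter obtained by tilting the odds of message `1` by the factor `t`. This map is strictly
increasing and continuous in `t ≥ 0` with values `0` at `t = 0` and `θ₁` at `t = 1`, while
`λ ↦ exp (-1/λ)` increases strictly on `(0, ∞)` from `0` (as `λ → 0⁺`) to `1` (as `λ → ∞`).
-/

/-- The Bernoulli parameter whose odds are `t` times the odds of `θ`. -/
noncomputable def tiltedParam (θ t : ℝ) : ℝ := θ * t / (θ * t + 1 - θ)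

section TiltedParam

variable {θ : ℝ}

lemma tiltedParam_denom_pos (hθ₀ : 0 ≤ θ) (hθ₁ : θ < 1) {t : ℝ} (ht : 0 ≤ t) :
    0 < θ * t + 1 - θ := by
  nlinarith [mul_nonneg hθ₀ ht]

lemma tiltedParam_pos (hθ₀ : 0 < θ) (hθ₁ : θ < 1) {t : ℝ} (ht : 0 < t) :
    0 < tiltedParam θ t :=
  div_pos (mul_pos hθ₀ ht) (tiltedParam_denom_pos hθ₀.le hθ₁ ht.le)

lemma tiltedParam_lt_self (hθ₀ : 0 < θ) (hθ₁ : θ < 1) {t : ℝ} (ht₀ : 0 ≤ t) (ht₁ : t < 1) :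
    tiltedParam θ t < θ := by
  rw [tiltedParam, div_lt_iff₀ (tiltedParam_denom_pos hθ₀.le hθ₁ ht₀)]
  nlinarith [mul_pos (mul_pos hθ₀ (sub_pos.2 hθ₁)) (sub_pos.2 ht₁)]

lemma strictMonoOn_tiltedParam (hθ₀ : 0 < θ) (hθ₁ : θ < 1) :
    StrictMonoOn (tiltedParam θ) (Ici 0) := by
  intro s hs t ht hst
  rw [tiltedParam, tiltedParam, div_lt_div_iff₀ (tiltedParam_denom_pos hθ₀.le hθ₁ hs)
    (tiltedParam_denom_pos hθ₀.le hθ₁ ht)]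
  nlinarith [mul_pos (mul_pos hθ₀ (sub_pos.2 hθ₁)) (sub_pos.2 hst)]

lemma continuousOn_tiltedParam (hθ₀ : 0 ≤ θ) (hθ₁ : θ < 1) :
    ContinuousOn (tiltedParam θ) (Ici 0) :=
  ContinuousOn.div (by fun_prop) (by fun_prop)
    fun _ ht ↦ (tiltedParam_denom_pos hθ₀ hθ₁ ht).ne'

@[simp]
lemma tiltedParam_zero (θ : ℝ) : tiltedParam θ 0 = 0 := by
  simp [tiltedParam]

@[simp]
lemma tiltedParam_one (θ : ℝ) : tiltedParam θ 1 = θ := by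
  simp [tiltedParam]

end TiltedParam

lemma exp_neg_one_div_lt_one {x : ℝ} (hx : 0 < x) : exp (-1 / x) < 1 :=
  exp_lt_one_iff.2 (div_neg_of_neg_of_pos neg_one_lt_zero hx)

lemma strictMonoOn_exp_neg_one_div : StrictMonoOn (fun x : ℝ ↦ exp (-1 / x)) (Ioi 0) := by
  intro a ha b hb hab
  simp only [neg_div, exp_lt_exp, neg_lt_neg_iff]
  exact one_div_lt_one_div_of_lt ha hab

lemma tendsto_exp_neg_one_div_nhdsGT_zero :
    Tendsto (fun x : ℝ ↦ exp (-1 / x)) (𝓝[>] 0) (𝓝 0) := by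
  have h : Tendsto (fun x : ℝ ↦ -1 / x) (𝓝[>] 0) atBot := by
    simpa only [neg_div, one_div, tendsto_neg_atBot_iff] using tendsto_inv_nhdsGT_zero
  exact tendsto_exp_atBot.comp h

lemma tendsto_exp_neg_one_div_atTop :
    Tendsto (fun x : ℝ ↦ exp (-1 / x)) atTop (𝓝 1) := by
  have h : Tendsto (fun x : ℝ ↦ -1 / x) atTop (𝓝 0) := by
    simpa only [neg_div, one_div, neg_zero] using (tendsto_inv_atTop_zero (𝕜 := ℝ)).neg
  simpa only [exp_zero] using h.rexp

theorem stmt13 (θ₀ θ₁ : ℝ) (hθ₀ : 0 < θ₀) (hθ₀₁ : θ₀ < θ₁) (hθ₁ : θ₁ < 1)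
    (θbar : ℝ → ℝ)
    (hθbar : ∀ lam : ℝ, θbar lam =
      θ₁ * Real.exp (-1/lam) / (θ₁ * Real.exp (-1/lam) + 1 - θ₁)) :
    (∀ lam : ℝ, 0 < lam → 0 < θbar lam ∧ θbar lam < θ₁) ∧
    StrictMonoOn θbar (Set.Ioi (0:ℝ)) ∧
    Filter.Tendsto θbar (nhdsWithin 0 (Set.Ioi (0:ℝ))) (nhds 0) ∧
    Filter.Tendsto θbar Filter.atTop (nhds θ₁) := by
  have hθ₁pos : 0 < θ₁ := hθ₀.trans hθ₀₁
  obtain rfl : θbar = tiltedParam θ₁ ∘ fun lam ↦ exp (-1 / lam) := funext hθbar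
  have hcont := continuousOn_tiltedParam hθ₁pos.le hθ₁
  refine ⟨fun lam hlam ↦ ⟨tiltedParam_pos hθ₁pos hθ₁ (exp_pos _),
      tiltedParam_lt_self hθ₁pos hθ₁ (exp_pos _).le (exp_neg_one_div_lt_one hlam)⟩,
    (strictMonoOn_tiltedParam hθ₁pos hθ₁).comp strictMonoOn_exp_neg_one_div
      fun _ _ ↦ (exp_pos _).le, ?_, ?_⟩
  · simpa using ((hcont 0 self_mem_Ici).tendsto.comp (tendsto_nhdsWithin_iff.2
      ⟨tendsto_exp_neg_one_div_nhdsGT_zero, .of_forall fun _ ↦ (exp_pos _).le⟩))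
  · simpa using ((hcont 1 (mem_Ici.2 zero_le_one)).tendsto.comp (tendsto_nhdsWithin_iff.2
      ⟨tendsto_exp_neg_one_div_atTop, .of_forall fun _ ↦ (exp_pos _).le⟩))
end

section
/- Let g : M → ℝ be bounded measurable with 0 ≤ g ≤ 1, f a probability density, λ > 0, and σ*(m) = f(m) e^{-g(m)/λ}/Z with Z = ∫ f e^{-g/λ}. Then the attacker's optimal cost V(λ) = ∫ g dσ* + λ D(σ*‖f) = −λ ln Z is nondecreasing in λ, satisfies 0 ≤ V(λ) ≤ ∫ g df for all λ > 0, and V(λ) → ∫ g df as λ → ∞ while V(λ) → ess inf g as λ → 0⁺. -/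
open MeasureTheory Real Filter Set
open scoped Topology ENNReal

/-!
Under the probability measure `ν = f μ` the partition function is `Z(λ) = ∫ e^{-g/λ} dν` and
`V(λ) = -λ log Z(λ)`. The variational identity is the pointwise computation
`log (σ / f) = -g / λ - log Z`. Monotonicity is Jensen's inequality for the concave map
`x ↦ x ^ (λ₁ / λ₂)`, which gives `Z(λ₂) ≤ Z(λ₁) ^ (λ₁ / λ₂)`, and Jensen for `exp` gives
`V(λ) ≤ ∫ g dν`. As `λ → ∞`, the bound `e^x ≤ 1 + x + x²` for `|x| ≤ 1` together with
`log Z ≤ Z - 1` gives `V(λ) ≥ ∫ g dν - C² / λ` when `|g| ≤ C ≤ λ`. As `λ → 0⁺`, `V ≥ ess inf g`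
since `g ≥ ess inf g` a.e., while for `b > ess inf g` the set `{g < b}` has some mass `δ > 0`,
whence `V(λ) ≤ b - λ log δ`.
-/

noncomputable section

variable {M : Type*} [MeasurableSpace M]

def partitionFunction (ν : Measure M) (g : M → ℝ) (lam : ℝ) : ℝ :=
  ∫ m, exp (-g m / lam) ∂ν

def softMin (ν : Measure M) (g : M → ℝ) (lam : ℝ) : ℝ :=
  -lam * log (partitionFunction ν g lam)

lemma measure_lt_ne_zero_of_essInf_lt {β : Type*} [ConditionallyCompleteLinearOrder β]
    {μ : Measure M} {f : M → β} {b : β} (hf : IsCoboundedUnder (· ≥ ·) (ae μ) f)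
    (hb : essInf f μ < b) : μ {m | f m < b} ≠ 0 := by
  intro h
  have hae : ∀ᵐ m ∂μ, b ≤ f m := by
    simpa only [ae_iff, not_le] using h
  exact (le_essInf_of_ae_le b hae hf).not_gt hb

lemma exp_neg_div_le_exp_div {x C lam : ℝ} (hx : |x| ≤ C) (hlam : 0 < lam) :
    exp (-x / lam) ≤ exp (C / lam) :=
  exp_le_exp.2 (div_le_div_of_nonneg_right ((neg_le_abs x).trans hx) hlam.le)

lemma integral_withDensity_ofReal {μ : Measure M} {f : M → ℝ} (hf : AEMeasurable f μ)
    (hf₀ : 0 ≤ᵐ[μ] f) (u : M → ℝ) :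
    ∫ m, u m ∂μ.withDensity (fun m => ENNReal.ofReal (f m)) = ∫ m, f m * u m ∂μ := by
  rw [integral_withDensity_eq_integral_toReal_smul₀ hf.ennreal_ofReal
    (.of_forall fun _ => ENNReal.ofReal_lt_top)]
  refine integral_congr_ae (hf₀.mono fun m (hm : 0 ≤ f m) => ?_)
  simp only [ENNReal.toReal_ofReal hm, smul_eq_mul]

lemma isProbabilityMeasure_withDensity_ofReal {μ : Measure M} {f : M → ℝ} (hf₀ : 0 ≤ᵐ[μ] f)
    (hf : Integrable f μ) (hf₁ : ∫ m, f m ∂μ = 1) :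
    IsProbabilityMeasure (μ.withDensity fun m => ENNReal.ofReal (f m)) := by
  constructor
  rw [withDensity_apply _ MeasurableSet.univ, setLIntegral_univ,
    ← ofReal_integral_eq_lintegral_ofReal hf hf₀, hf₁, ENNReal.ofReal_one]

lemma gibbs_cost_add_mul_relEntropy_eq {μ : Measure M} {f g : M → ℝ} {lam Z : ℝ}
    (hlam : lam ≠ 0) (hZ : Z = ∫ m, f m * exp (-g m / lam) ∂μ) (hZ₀ : Z ≠ 0)
    (hint : Integrable (fun m => f m * exp (-g m / lam)) μ)
    (hgint : Integrable (fun m => g m * (f m * exp (-g m / lam))) μ) :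
    (∫ m, g m * (f m * exp (-g m / lam) / Z) ∂μ)
      + lam * ∫ m, (f m * exp (-g m / lam) / Z)
          * log ((f m * exp (-g m / lam) / Z) / f m) ∂μ
      = -lam * log Z := by
  have hlog : ∀ m, (f m * exp (-g m / lam) / Z) * log ((f m * exp (-g m / lam) / Z) / f m)
      = -(1 / lam) * (g m * (f m * exp (-g m / lam) / Z))
        - log Z * (f m * exp (-g m / lam) / Z) := fun m => by
    rcases eq_or_ne (f m) 0 with hf | hf
    · simp [hf]
    · have hratio : f m * exp (-g m / lam) / Z / f m = exp (-g m / lam) / Z := by field_simp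
      rw [hratio, log_div (exp_pos _).ne' hZ₀, log_exp]
      field_simp
  have hmass : ∫ m, f m * exp (-g m / lam) / Z ∂μ = 1 := by
    rw [integral_div, ← hZ, div_self hZ₀]
  have hgσ : Integrable (fun m => g m * (f m * exp (-g m / lam) / Z)) μ := by
    simpa only [mul_div_assoc] using hgint.div_const Z
  rw [integral_congr_ae (.of_forall hlog),
    integral_sub (hgσ.const_mul _) ((hint.div_const Z).const_mul _),
    integral_const_mul, integral_const_mul, hmass]
  field_simp
  ring

section SoftMin

variable {ν : Measure M} {g : M → ℝ} {C lam : ℝ}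

lemma integrable_exp_neg_div [IsFiniteMeasure ν]
    (hg : Measurable g) (hC : ∀ m, |g m| ≤ C) (hlam : 0 < lam) :
    Integrable (fun m => exp (-g m / lam)) ν :=
  .of_bound (hg.neg.div_const lam).exp.aestronglyMeasurable (exp (C / lam))
    (.of_forall fun m => (norm_of_nonneg (exp_pos _).le).trans_le
      (exp_neg_div_le_exp_div (hC m) hlam))

lemma partitionFunction_pos [IsFiniteMeasure ν] [NeZero ν]
    (hg : Measurable g) (hC : ∀ m, |g m| ≤ C) (hlam : 0 < lam) :
    0 < partitionFunction ν g lam :=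
  integral_exp_pos (integrable_exp_neg_div hg hC hlam)

lemma partitionFunction_le_rpow [IsProbabilityMeasure ν] {l₁ l₂ : ℝ}
    (hg : Measurable g) (hC : ∀ m, |g m| ≤ C)
    (hl₁ : 0 < l₁) (hl₁₂ : l₁ ≤ l₂) :
    partitionFunction ν g l₂ ≤ partitionFunction ν g l₁ ^ (l₁ / l₂) := by
  have hl₂ : 0 < l₂ := hl₁.trans_le hl₁₂
  have hp : 0 ≤ l₁ / l₂ := by positivity
  have hrpow : ∀ m, exp (-g m / l₂) = exp (-g m / l₁) ^ (l₁ / l₂) := fun m => by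
    rw [← exp_mul]
    field_simp
  simp only [partitionFunction, hrpow]
  exact (concaveOn_rpow hp (div_le_one_of_le₀ hl₁₂ hl₂.le)).le_map_integral
    (continuousOn_id.rpow_const fun _ _ => Or.inr hp) isClosed_Ici
    (.of_forall fun m => (exp_pos _).le) (integrable_exp_neg_div hg hC hl₁)
    (by simpa only [Function.comp_def, ← hrpow] using integrable_exp_neg_div hg hC hl₂)

lemma monotoneOn_softMin [IsProbabilityMeasure ν] (hg : Measurable g) (hC : ∀ m, |g m| ≤ C) :
    MonotoneOn (softMin ν g) (Ioi 0) := by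
  intro l₁ (hl₁ : 0 < l₁) l₂ (hl₂ : 0 < l₂) hl₁₂
  have hlog : log (partitionFunction ν g l₂) ≤ l₁ / l₂ * log (partitionFunction ν g l₁) := by
    rw [← log_rpow (partitionFunction_pos hg hC hl₁)]
    exact log_le_log (partitionFunction_pos hg hC hl₂) (partitionFunction_le_rpow hg hC hl₁ hl₁₂)
  have := mul_le_mul_of_nonneg_left hlog hl₂.le
  rw [← mul_assoc, mul_div_cancel₀ _ hl₂.ne'] at this
  simp only [softMin]
  linarith

lemma integrable_of_abs_le [IsFiniteMeasure ν]
    (hg : Measurable g) (hC : ∀ m, |g m| ≤ C) : Integrable g ν :=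
  .of_bound hg.aestronglyMeasurable C (.of_forall hC)

lemma softMin_le_integral [IsProbabilityMeasure ν]
    (hg : Measurable g) (hC : ∀ m, |g m| ≤ C) (hlam : 0 < lam) :
    softMin ν g lam ≤ ∫ m, g m ∂ν := by
  have hjensen : exp (∫ m, -g m / lam ∂ν) ≤ partitionFunction ν g lam :=
    convexOn_exp.map_integral_le continuous_exp.continuousOn isClosed_univ
      (.of_forall fun _ => mem_univ _) ((integrable_of_abs_le hg hC).neg.div_const lam)
      (integrable_exp_neg_div hg hC hlam)
  rw [integral_div, integral_neg, ← le_log_iff_exp_le (partitionFunction_pos hg hC hlam)]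
    at hjensen
  have := mul_le_mul_of_nonneg_left hjensen hlam.le
  rw [mul_div_cancel₀ _ hlam.ne'] at this
  simp only [softMin]
  linarith

lemma integral_sub_sq_div_le_softMin [IsProbabilityMeasure ν]
    (hg : Measurable g) (hC : ∀ m, |g m| ≤ C)
    (hlam : 0 < lam) (hClam : C ≤ lam) :
    ∫ m, g m ∂ν - C ^ 2 / lam ≤ softMin ν g lam := by
  have hgi := integrable_of_abs_le (ν := ν) hg hC
  have hquad : ∀ m, exp (-g m / lam) ≤ 1 + -g m / lam + (C / lam) ^ 2 := fun m => by
    have hx : |-g m / lam| ≤ C / lam := by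
      rw [abs_div, abs_neg, abs_of_pos hlam]
      exact div_le_div_of_nonneg_right (hC m) hlam.le
    have hexp := abs_exp_sub_one_sub_id_le (hx.trans ((div_le_one hlam).2 hClam))
    have hsq : (-g m / lam) ^ 2 ≤ (C / lam) ^ 2 := sq_le_sq' (abs_le.1 hx).1 (abs_le.1 hx).2
    linarith [le_abs_self (exp (-g m / lam) - 1 - -g m / lam)]
  have hdiv : Integrable (fun m => -g m / lam) ν := hgi.neg.div_const lam
  have hlin : Integrable (fun m => 1 + -g m / lam) ν := (integrable_const 1).add hdiv
  have hZ : partitionFunction ν g lam ≤ 1 - (∫ m, g m ∂ν) / lam + (C / lam) ^ 2 := by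
    calc partitionFunction ν g lam ≤ ∫ m, (1 + -g m / lam + (C / lam) ^ 2) ∂ν :=
          integral_mono (integrable_exp_neg_div hg hC hlam) (hlin.add (integrable_const _)) hquad
      _ = 1 - (∫ m, g m ∂ν) / lam + (C / lam) ^ 2 := by
          rw [integral_add hlin (integrable_const _),
            integral_add (integrable_const 1) hdiv, integral_div, integral_neg]
          simp [sub_eq_add_neg, neg_div]
  calc ∫ m, g m ∂ν - C ^ 2 / lam = lam * ((∫ m, g m ∂ν) / lam - (C / lam) ^ 2) := by
        field_simp
    _ ≤ lam * (1 - partitionFunction ν g lam) := mul_le_mul_of_nonneg_left (by linarith) hlam.le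
    _ ≤ softMin ν g lam := by
        rw [softMin, neg_mul, ← mul_neg]
        gcongr
        linarith [log_le_sub_one_of_pos (partitionFunction_pos (ν := ν) hg hC hlam)]

theorem tendsto_softMin_atTop [IsProbabilityMeasure ν] (hg : Measurable g) (hC : ∀ m, |g m| ≤ C) :
    Tendsto (softMin ν g) atTop (𝓝 (∫ m, g m ∂ν)) := by
  have hlower : Tendsto (fun lam => ∫ m, g m ∂ν - C ^ 2 / lam) atTop (𝓝 (∫ m, g m ∂ν)) := by
    simpa using
      tendsto_const_nhds.sub (tendsto_const_nhds.div_atTop (tendsto_id (x := atTop (α := ℝ))))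
  refine tendsto_of_tendsto_of_tendsto_of_le_of_le' hlower tendsto_const_nhds ?_ ?_
  · filter_upwards [eventually_gt_atTop 0, eventually_ge_atTop C] with lam hlam hClam
    exact integral_sub_sq_div_le_softMin hg hC hlam hClam
  · filter_upwards [eventually_gt_atTop 0] with lam hlam
    exact softMin_le_integral hg hC hlam

lemma isCoboundedUnder_ge_ae_of_abs_le [NeZero ν] (hC : ∀ m, |g m| ≤ C) :
    IsCoboundedUnder (· ≥ ·) (ae ν) g :=
  (isBoundedUnder_of ⟨C, fun m => le_of_abs_le (hC m)⟩).isCoboundedUnder_ge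

lemma essInf_le_softMin [IsProbabilityMeasure ν]
    (hg : Measurable g) (hC : ∀ m, |g m| ≤ C) (hlam : 0 < lam) :
    essInf g ν ≤ softMin ν g lam := by
  have hae : ∀ᵐ m ∂ν, essInf g ν ≤ g m :=
    ae_essInf_le (isBoundedUnder_of ⟨-C, fun m => neg_le_of_abs_le (hC m)⟩)
  have hZ : partitionFunction ν g lam ≤ exp (-essInf g ν / lam) := by
    calc partitionFunction ν g lam ≤ ∫ _, exp (-essInf g ν / lam) ∂ν :=
          integral_mono_ae (integrable_exp_neg_div hg hC hlam) (integrable_const _)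
            (hae.mono fun m hm => exp_le_exp.2 (div_le_div_of_nonneg_right (neg_le_neg hm) hlam.le))
      _ = exp (-essInf g ν / lam) := by simp
  rw [← log_le_iff_le_exp (partitionFunction_pos hg hC hlam)] at hZ
  have := mul_le_mul_of_nonneg_left hZ hlam.le
  rw [mul_div_cancel₀ _ hlam.ne'] at this
  simp only [softMin]
  linarith

lemma softMin_le_sub_mul_log_measureReal [IsFiniteMeasure ν]
    (hg : Measurable g) (hC : ∀ m, |g m| ≤ C)
    (hlam : 0 < lam) {b : ℝ} (hb : ν {m | g m < b} ≠ 0) :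
    softMin ν g lam ≤ b - lam * log (ν.real {m | g m < b}) := by
  have hs : MeasurableSet {m | g m < b} := measurableSet_lt hg measurable_const
  have hδ : 0 < ν.real {m | g m < b} := ENNReal.toReal_pos hb (measure_ne_top ν _)
  have hZ : ν.real {m | g m < b} * exp (-b / lam) ≤ partitionFunction ν g lam := by
    calc ν.real {m | g m < b} * exp (-b / lam)
        = ∫ m, {m | g m < b}.indicator (fun _ => exp (-b / lam)) m ∂ν := by
          rw [integral_indicator_const _ hs, smul_eq_mul]
      _ ≤ partitionFunction ν g lam :=
          integral_mono ((integrable_const _).indicator hs) (integrable_exp_neg_div hg hC hlam)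
            (indicator_le' (fun m (hm : g m < b) => exp_le_exp.2
              (div_le_div_of_nonneg_right (neg_le_neg hm.le) hlam.le))
              fun m _ => (exp_pos _).le)
  have hlog := log_le_log (by positivity) hZ
  rw [log_mul hδ.ne' (exp_pos _).ne', log_exp] at hlog
  have := mul_le_mul_of_nonneg_left hlog hlam.le
  rw [mul_add, mul_div_cancel₀ _ hlam.ne'] at this
  simp only [softMin]
  linarith

theorem tendsto_softMin_nhdsGT_zero [IsProbabilityMeasure ν]
    (hg : Measurable g) (hC : ∀ m, |g m| ≤ C) :
    Tendsto (softMin ν g) (𝓝[>] 0) (𝓝 (essInf g ν)) := by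
  rw [tendsto_order]
  refine ⟨fun a ha => ?_, fun b hb => ?_⟩
  · filter_upwards [self_mem_nhdsWithin] with lam hlam
    exact ha.trans_le (essInf_le_softMin hg hC hlam)
  · obtain ⟨b', hb'⟩ := exists_between hb
    have hpos := measure_lt_ne_zero_of_essInf_lt (isCoboundedUnder_ge_ae_of_abs_le hC) hb'.1
    have hlim : Tendsto (fun lam => b' - lam * log (ν.real {m | g m < b'})) (𝓝[>] 0) (𝓝 b') := by
      have hcont : Continuous fun lam => b' - lam * log (ν.real {m | g m < b'}) := by fun_prop
      simpa using (hcont.tendsto 0).mono_left nhdsWithin_le_nhds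
    filter_upwards [hlim.eventually_lt_const hb'.2, self_mem_nhdsWithin] with lam hlt hlam
    exact (softMin_le_sub_mul_log_measureReal hg hC hlam hpos).trans_lt hlt

end SoftMin

end

theorem stmt17 {M : Type*} [MeasurableSpace M] (μ : Measure M)
    (f g : M → ℝ) (hf_meas : Measurable f) (hg_meas : Measurable g)
    (hf_nonneg : ∀ m, 0 ≤ f m) (hf_int : Integrable f μ) (hf_one : ∫ m, f m ∂μ = 1)
    (hg0 : ∀ m, 0 ≤ g m) (hg1 : ∀ m, g m ≤ 1)
    (Z : ℝ → ℝ) (hZ : ∀ lam, Z lam = ∫ m, f m * Real.exp (-(g m) / lam) ∂μ)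
    (V : ℝ → ℝ) (hV : ∀ lam, V lam = -lam * Real.log (Z lam)) :
    (∀ lam, 0 < lam →
      (∫ m, g m * (f m * Real.exp (-(g m) / lam) / Z lam) ∂μ)
        + lam * ∫ m, (f m * Real.exp (-(g m) / lam) / Z lam)
            * Real.log ((f m * Real.exp (-(g m) / lam) / Z lam) / f m) ∂μ
      = V lam) ∧
    MonotoneOn V (Set.Ioi (0:ℝ)) ∧
    (∀ lam, 0 < lam → 0 ≤ V lam ∧ V lam ≤ ∫ m, g m * f m ∂μ) ∧
    Filter.Tendsto V Filter.atTop (nhds (∫ m, g m * f m ∂μ)) ∧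
    Filter.Tendsto V (nhdsWithin 0 (Set.Ioi (0:ℝ)))
      (nhds (essInf g (μ.withDensity fun m => ENNReal.ofReal (f m)))) := by
  set ν := μ.withDensity fun m => ENNReal.ofReal (f m)
  have hf₀ : 0 ≤ᵐ[μ] f := .of_forall hf_nonneg
  have : IsProbabilityMeasure ν := isProbabilityMeasure_withDensity_ofReal hf₀ hf_int hf_one
  have hν : ∀ u : M → ℝ, ∫ m, u m ∂ν = ∫ m, f m * u m ∂μ :=
    integral_withDensity_ofReal hf_meas.aemeasurable hf₀
  have hgC : ∀ m, |g m| ≤ 1 := fun m => abs_le.2 ⟨by linarith [hg0 m], hg1 m⟩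
  have hZν : Z = partitionFunction ν g := funext fun lam => by rw [hZ, partitionFunction, hν]
  have hVν : V = softMin ν g := funext fun lam => by rw [hV, hZν, softMin]
  have hmean : ∫ m, g m * f m ∂μ = ∫ m, g m ∂ν := by simp_rw [hν, mul_comm]
  refine ⟨fun lam hlam => ?_, ?_, fun lam hlam => ?_, ?_, ?_⟩
  · have hint : Integrable (fun m => f m * exp (-g m / lam)) μ :=
      hf_int.mul_bdd (hg_meas.neg.div_const lam).exp.aestronglyMeasurable
        (.of_forall fun m => (norm_of_nonneg (exp_pos _).le).trans_le
          (exp_neg_div_le_exp_div (hgC m) hlam))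
    have hZ₀ : Z lam ≠ 0 := by
      rw [hZν]
      exact (partitionFunction_pos hg_meas hgC hlam).ne'
    rw [hV]
    exact gibbs_cost_add_mul_relEntropy_eq hlam.ne' (hZ lam) hZ₀ hint
      (hint.bdd_mul hg_meas.aestronglyMeasurable (.of_forall hgC))
  · rw [hVν]
    exact monotoneOn_softMin hg_meas hgC
  · rw [hVν, hmean]
    exact ⟨(le_essInf_of_ae_le 0 (.of_forall hg0) (isCoboundedUnder_ge_ae_of_abs_le hgC)).trans
      (essInf_le_softMin hg_meas hgC hlam), softMin_le_integral hg_meas hgC hlam⟩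
  · rw [hVν, hmean]
    exact tendsto_softMin_atTop hg_meas hgC
  · rw [hVν]
    exact tendsto_softMin_nhdsGT_zero hg_meas hgC
end
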